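/- (Contraction of the other composition order) With the same setup of rank-sparsity incoherence, for every ρ > 0 the composition P_T̄ ∘ P_Ω̄ satisfies ‖P_T̄ ∘ P_Ω̄‖_{ℓ∞→ℓ∞} ≤ α(ρ)β(ρ), where ‖·‖_{ℓ∞→ℓ∞} is the induced operator norm with respect to the entrywise maximum absolute value norm. -/

import Mathlib

open scoped BigOperators
open Matrix
noncomputable section

namespace SLR

/-- Trace inner product `⟨A,B⟩ = tr(AᵀB)`. -/
def inner' {m n : ℕ} (A B : Matrix (Fin m) (Fin n) ℝ) : ℝ := ∑ i, ∑ j, A i j * B i j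

/-- Entrywise 1-norm. -/
def l1 {m n : ℕ} (M : Matrix (Fin m) (Fin n) ℝ) : ℝ := ∑ i, ∑ j, |M i j|

/-- Entrywise ∞-norm (maximum absolute value of an entry). -/
def linf {m n : ℕ} (M : Matrix (Fin m) (Fin n) ℝ) : ℝ := ⨆ i, ⨆ j, |M i j|

/-- Frobenius norm. -/
def frob {m n : ℕ} (M : Matrix (Fin m) (Fin n) ℝ) : ℝ :=
  Real.sqrt (∑ i, ∑ j, (M i j) ^ 2)

/-- `‖M‖_{1→1}`: maximum column absolute sum. -/
def n11 {m n : ℕ} (M : Matrix (Fin m) (Fin n) ℝ) : ℝ := ⨆ j, ∑ i, |M i j|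

/-- `‖M‖_{∞→∞}`: maximum row absolute sum. -/
def nII {m n : ℕ} (M : Matrix (Fin m) (Fin n) ℝ) : ℝ := ⨆ i, ∑ j, |M i j|

/-- Spectral norm `‖M‖_{2→2}`. -/
def spec {m n : ℕ} (M : Matrix (Fin m) (Fin n) ℝ) : ℝ :=
  ‖LinearMap.toContinuousLinearMap (Matrix.toEuclideanLin M)‖

/-- Trace (nuclear) norm: sum of singular values. -/
def traceNorm {m n : ℕ} (M : Matrix (Fin m) (Fin n) ℝ) : ℝ :=
  ∑ i, Real.sqrt ((show (Mᵀ * M).IsHermitian by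
    simpa [Matrix.conjTranspose_eq_transpose_of_trivial] using
      Matrix.isHermitian_conjTranspose_mul_self M).eigenvalues i)

/-- The hybrid norm `‖M‖_{♯(ρ)} = max{ρ‖M‖_{1→1}, ρ⁻¹‖M‖_{∞→∞}}`. -/
def sharp {m n : ℕ} (ρ : ℝ) (M : Matrix (Fin m) (Fin n) ℝ) : ℝ :=
  max (ρ * n11 M) (ρ⁻¹ * nII M)

/-- The dual norm `‖·‖_{♭(ρ)}` of `‖·‖_{♯(ρ)}`. -/
def flat {m n : ℕ} (ρ : ℝ) (M : Matrix (Fin m) (Fin n) ℝ) : ℝ :=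
  sSup {x : ℝ | ∃ N : Matrix (Fin m) (Fin n) ℝ, sharp ρ N ≤ 1 ∧ x = inner' M N}

/-- Induced operator norm of a map `T` with respect to the norm `f`. -/
def opNormWrt {m n : ℕ} (f : Matrix (Fin m) (Fin n) ℝ → ℝ)
    (T : Matrix (Fin m) (Fin n) ℝ → Matrix (Fin m) (Fin n) ℝ) : ℝ :=
  sSup {x : ℝ | ∃ M, f M ≤ 1 ∧ x = f (T M)}

/-- Entrywise sign matrix. -/
def signM {m n : ℕ} (M : Matrix (Fin m) (Fin n) ℝ) : Matrix (Fin m) (Fin n) ℝ :=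
  Matrix.of fun i j => Real.sign (M i j)

/-- Orthogonal projection onto matrices supported on `supp X`. -/
def POmega {m n : ℕ} (X : Matrix (Fin m) (Fin n) ℝ) (M : Matrix (Fin m) (Fin n) ℝ) :
    Matrix (Fin m) (Fin n) ℝ :=
  Matrix.of fun i j => if X i j ≠ 0 then M i j else 0

/-- Orthogonal projection onto the tangent space `T` determined by `U`, `V`. -/
def PT {m n r : ℕ} (U : Matrix (Fin m) (Fin r) ℝ) (V : Matrix (Fin n) (Fin r) ℝ)
    (M : Matrix (Fin m) (Fin n) ℝ) : Matrix (Fin m) (Fin n) ℝ :=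
  U * Uᵀ * M + M * (V * Vᵀ) - U * Uᵀ * M * (V * Vᵀ)

/-- `‖U‖_{2→∞}`: maximum row Euclidean norm. -/
def two2inf {m r : ℕ} (U : Matrix (Fin m) (Fin r) ℝ) : ℝ :=
  ⨆ i, Real.sqrt (∑ k, (U i k) ^ 2)

/-- The sparsity measure `α(ρ)` of `X̄_S`. -/
def alpha {m n : ℕ} (X : Matrix (Fin m) (Fin n) ℝ) (ρ : ℝ) : ℝ :=
  max (ρ * n11 (signM X)) (ρ⁻¹ * nII (signM X))

/-- The incoherence measure `β(ρ)` of the singular vectors `U`, `V`. -/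
def beta {m n r : ℕ} (U : Matrix (Fin m) (Fin r) ℝ) (V : Matrix (Fin n) (Fin r) ℝ)
    (ρ : ℝ) : ℝ :=
  ρ⁻¹ * linf (U * Uᵀ) + ρ * linf (V * Vᵀ) + two2inf U * two2inf V

/-- Number of nonzero entries. -/
def suppCard {m n : ℕ} (X : Matrix (Fin m) (Fin n) ℝ) : ℕ :=
  (Finset.univ.filter fun p : Fin m × Fin n => X p.1 p.2 ≠ 0).card

/-! `P_Ω̄` maps the `ℓ∞`-ball into the `♯(ρ)`-ball of radius `α(ρ)`, because `P_Ω̄ M` is dominated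
entrywise by `‖M‖_{ℓ∞} |sign X̄_S|`. `P_T̄` maps the `♯(ρ)`-ball into the `ℓ∞`-ball of radius
`β(ρ)`: of its three terms, `ŪŪᵀN` and `NV̄V̄ᵀ` are controlled by a column resp. row sum of `N`,
and `ŪŪᵀNV̄V̄ᵀ` by the Schur test `‖N‖_{2→2}² ≤ ‖N‖_{1→1}‖N‖_{∞→∞} ≤ ‖N‖_{♯(ρ)}²` together with the
fact that the rows of the projector `ŪŪᵀ` have the same Euclidean norm as the rows of `Ū`. -/

section Norms

variable {m n : ℕ}

lemma abs_le_linf (M : Matrix (Fin m) (Fin n) ℝ) (i : Fin m) (j : Fin n) : |M i j| ≤ linf M :=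
  (le_ciSup (Set.finite_range fun j => |M i j|).bddAbove j).trans
    (le_ciSup (Set.finite_range fun i => ⨆ j, |M i j|).bddAbove i)

lemma linf_nonneg (M : Matrix (Fin m) (Fin n) ℝ) : 0 ≤ linf M :=
  Real.iSup_nonneg fun _ => Real.iSup_nonneg fun _ => abs_nonneg _

lemma linf_le {M : Matrix (Fin m) (Fin n) ℝ} {c : ℝ} (hc : 0 ≤ c)
    (h : ∀ i j, |M i j| ≤ c) : linf M ≤ c :=
  Real.iSup_le (fun i => Real.iSup_le (h i) hc) hc

lemma sum_abs_le_n11 (M : Matrix (Fin m) (Fin n) ℝ) (j : Fin n) : ∑ i, |M i j| ≤ n11 M :=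
  le_ciSup (Set.finite_range fun j => ∑ i, |M i j|).bddAbove j

lemma sum_abs_le_nII (M : Matrix (Fin m) (Fin n) ℝ) (i : Fin m) : ∑ j, |M i j| ≤ nII M :=
  le_ciSup (Set.finite_range fun i => ∑ j, |M i j|).bddAbove i

lemma n11_nonneg (M : Matrix (Fin m) (Fin n) ℝ) : 0 ≤ n11 M :=
  Real.iSup_nonneg fun _ => Finset.sum_nonneg fun _ _ => abs_nonneg _

lemma nII_nonneg (M : Matrix (Fin m) (Fin n) ℝ) : 0 ≤ nII M :=
  Real.iSup_nonneg fun _ => Finset.sum_nonneg fun _ _ => abs_nonneg _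

lemma n11_le_mul_of_abs_le {A B : Matrix (Fin m) (Fin n) ℝ} {c : ℝ} (hc : 0 ≤ c)
    (h : ∀ i j, |A i j| ≤ |B i j| * c) : n11 A ≤ n11 B * c :=
  Real.iSup_le (fun j => calc
      ∑ i, |A i j| ≤ ∑ i, |B i j| * c := Finset.sum_le_sum fun i _ => h i j
      _ = (∑ i, |B i j|) * c := (Finset.sum_mul ..).symm
      _ ≤ n11 B * c := mul_le_mul_of_nonneg_right (sum_abs_le_n11 B j) hc)
    (mul_nonneg (n11_nonneg B) hc)

lemma nII_le_mul_of_abs_le {A B : Matrix (Fin m) (Fin n) ℝ} {c : ℝ} (hc : 0 ≤ c)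
    (h : ∀ i j, |A i j| ≤ |B i j| * c) : nII A ≤ nII B * c :=
  Real.iSup_le (fun i => calc
      ∑ j, |A i j| ≤ ∑ j, |B i j| * c := Finset.sum_le_sum fun j _ => h i j
      _ = (∑ j, |B i j|) * c := (Finset.sum_mul ..).symm
      _ ≤ nII B * c := mul_le_mul_of_nonneg_right (sum_abs_le_nII B i) hc)
    (mul_nonneg (nII_nonneg B) hc)

variable {ρ : ℝ}

lemma sharp_nonneg (hρ : 0 ≤ ρ) (M : Matrix (Fin m) (Fin n) ℝ) : 0 ≤ sharp ρ M :=
  (mul_nonneg hρ (n11_nonneg M)).trans (le_max_left _ _)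

lemma sharp_le_mul_of_abs_le (hρ : 0 ≤ ρ) {A B : Matrix (Fin m) (Fin n) ℝ} {c : ℝ}
    (hc : 0 ≤ c) (h : ∀ i j, |A i j| ≤ |B i j| * c) : sharp ρ A ≤ sharp ρ B * c := by
  rw [sharp, sharp, max_mul_of_nonneg _ _ hc, mul_assoc, mul_assoc]
  exact max_le_max (mul_le_mul_of_nonneg_left (n11_le_mul_of_abs_le hc h) hρ)
    (mul_le_mul_of_nonneg_left (nII_le_mul_of_abs_le hc h) (inv_nonneg.2 hρ))

lemma n11_le_inv_mul_sharp (hρ : 0 < ρ) (N : Matrix (Fin m) (Fin n) ℝ) :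
    n11 N ≤ ρ⁻¹ * sharp ρ N :=
  (le_inv_mul_iff₀ hρ).2 (le_max_left _ _)

lemma nII_le_mul_sharp (hρ : 0 < ρ) (N : Matrix (Fin m) (Fin n) ℝ) :
    nII N ≤ ρ * sharp ρ N :=
  (inv_mul_le_iff₀ hρ).1 (le_max_right _ _)

lemma n11_mul_nII_le_sharp_sq (hρ : 0 < ρ) (N : Matrix (Fin m) (Fin n) ℝ) :
    n11 N * nII N ≤ sharp ρ N ^ 2 :=
  calc n11 N * nII N ≤ ρ⁻¹ * sharp ρ N * (ρ * sharp ρ N) :=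
        mul_le_mul (n11_le_inv_mul_sharp hρ N) (nII_le_mul_sharp hρ N) (nII_nonneg N)
          (mul_nonneg (inv_nonneg.2 hρ.le) (sharp_nonneg hρ.le N))
    _ = sharp ρ N ^ 2 := by field_simp

lemma sum_sq_le_two2inf_sq (U : Matrix (Fin m) (Fin n) ℝ) (i : Fin m) :
    ∑ k, U i k ^ 2 ≤ two2inf U ^ 2 := by
  rw [← Real.sq_sqrt (Finset.sum_nonneg fun k _ => sq_nonneg (U i k))]
  exact pow_le_pow_left₀ (Real.sqrt_nonneg _)
    (le_ciSup (Set.finite_range fun i => √(∑ k, U i k ^ 2)).bddAbove i) 2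

lemma two2inf_nonneg (U : Matrix (Fin m) (Fin n) ℝ) : 0 ≤ two2inf U :=
  Real.iSup_nonneg fun _ => Real.sqrt_nonneg _

lemma beta_nonneg {r : ℕ} (hρ : 0 ≤ ρ) (U : Matrix (Fin m) (Fin r) ℝ)
    (V : Matrix (Fin n) (Fin r) ℝ) : 0 ≤ beta U V ρ := by
  have := two2inf_nonneg U
  have := two2inf_nonneg V
  have := linf_nonneg (U * Uᵀ)
  have := linf_nonneg (V * Vᵀ)
  unfold beta
  positivity

end Norms

section Entries

variable {m n p q : ℕ}

lemma abs_mul_apply_le_linf_mul_n11 (A : Matrix (Fin m) (Fin p) ℝ)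
    (N : Matrix (Fin p) (Fin n) ℝ) (i : Fin m) (j : Fin n) :
    |(A * N) i j| ≤ linf A * n11 N :=
  calc |(A * N) i j| ≤ ∑ k, |A i k| * |N k j| := by
        simpa only [mul_apply, abs_mul] using Finset.abs_sum_le_sum_abs (fun k => A i k * N k j) _
    _ ≤ ∑ k, linf A * |N k j| :=
        Finset.sum_le_sum fun k _ => mul_le_mul_of_nonneg_right (abs_le_linf A i k) (abs_nonneg _)
    _ ≤ linf A * n11 N := by
        rw [← Finset.mul_sum]
        exact mul_le_mul_of_nonneg_left (sum_abs_le_n11 N j) (linf_nonneg A)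

lemma abs_mul_apply_le_nII_mul_linf (N : Matrix (Fin m) (Fin p) ℝ)
    (B : Matrix (Fin p) (Fin n) ℝ) (i : Fin m) (j : Fin n) :
    |(N * B) i j| ≤ nII N * linf B :=
  calc |(N * B) i j| ≤ ∑ l, |N i l| * |B l j| := by
        simpa only [mul_apply, abs_mul] using Finset.abs_sum_le_sum_abs (fun l => N i l * B l j) _
    _ ≤ ∑ l, |N i l| * linf B :=
        Finset.sum_le_sum fun l _ => mul_le_mul_of_nonneg_left (abs_le_linf B l j) (abs_nonneg _)
    _ ≤ nII N * linf B := by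
        rw [← Finset.sum_mul]
        exact mul_le_mul_of_nonneg_right (sum_abs_le_nII N i) (linf_nonneg B)

lemma sq_mul_mul_apply_le (A : Matrix (Fin m) (Fin p) ℝ) (N : Matrix (Fin p) (Fin q) ℝ)
    (B : Matrix (Fin q) (Fin n) ℝ) (i : Fin m) (j : Fin n) :
    (A * N * B) i j ^ 2 ≤ (∑ k, A i k ^ 2) * (∑ l, B l j ^ 2) * (n11 N * nII N) := by
  have h_entry : |(A * N * B) i j| ≤ ∑ x : Fin p × Fin q, |A i x.1| * |N x.1 x.2| * |B x.2 j| := by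
    rw [Fintype.sum_prod_type_right]
    simp only [mul_apply, Finset.sum_mul, ← abs_mul]
    exact (Finset.abs_sum_le_sum_abs _ _).trans
      (Finset.sum_le_sum fun l _ => Finset.abs_sum_le_sum_abs _ _)
  -- Cauchy–Schwarz with the weights `|N k l|` split evenly between the two factors
  have h_cs : (∑ x : Fin p × Fin q, |A i x.1| * |N x.1 x.2| * |B x.2 j|) ^ 2 ≤
      (∑ x : Fin p × Fin q, A i x.1 ^ 2 * |N x.1 x.2|) *
        ∑ x : Fin p × Fin q, |N x.1 x.2| * B x.2 j ^ 2 :=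
    Finset.sum_sq_le_sum_mul_sum_of_sq_le_mul _ (fun _ _ => by positivity)
      (fun _ _ => by positivity) fun _ _ =>
        le_of_eq (by rw [← sq_abs (A i _), ← sq_abs (B _ j)]; ring)
  have h_rows : ∑ x : Fin p × Fin q, A i x.1 ^ 2 * |N x.1 x.2| ≤ (∑ k, A i k ^ 2) * nII N := by
    simp only [Fintype.sum_prod_type, ← Finset.mul_sum, Finset.sum_mul]
    exact Finset.sum_le_sum fun k _ => mul_le_mul_of_nonneg_left (sum_abs_le_nII N k) (sq_nonneg _)
  have h_cols : ∑ x : Fin p × Fin q, |N x.1 x.2| * B x.2 j ^ 2 ≤ n11 N * ∑ l, B l j ^ 2 := by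
    simp only [Fintype.sum_prod_type_right, ← Finset.sum_mul, Finset.mul_sum]
    exact Finset.sum_le_sum fun l _ => mul_le_mul_of_nonneg_right (sum_abs_le_n11 N l) (sq_nonneg _)
  calc (A * N * B) i j ^ 2 ≤ (∑ x : Fin p × Fin q, |A i x.1| * |N x.1 x.2| * |B x.2 j|) ^ 2 := by
        rw [← sq_abs]; exact pow_le_pow_left₀ (abs_nonneg _) h_entry 2
    _ ≤ _ := h_cs
    _ ≤ (∑ k, A i k ^ 2) * nII N * (n11 N * ∑ l, B l j ^ 2) :=
        mul_le_mul h_rows h_cols (by positivity)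
          (mul_nonneg (Finset.sum_nonneg fun _ _ => sq_nonneg _) (nII_nonneg N))
    _ = _ := by ring

end Entries

lemma mul_transpose_self_apply_comm {m r : ℕ} (U : Matrix (Fin m) (Fin r) ℝ) (i k : Fin m) :
    (U * Uᵀ) k i = (U * Uᵀ) i k := by
  simp only [mul_apply, transpose_apply, mul_comm]

lemma sum_sq_mul_transpose_apply {m r : ℕ} {U : Matrix (Fin m) (Fin r) ℝ} (hU : Uᵀ * U = 1)
    (i : Fin m) : ∑ k, (U * Uᵀ) i k ^ 2 = ∑ s, U i s ^ 2 :=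
  calc ∑ k, (U * Uᵀ) i k ^ 2 = (U * Uᵀ * (U * Uᵀ)) i i := by
        rw [mul_apply]
        exact Finset.sum_congr rfl fun k _ => by
          rw [sq, mul_transpose_self_apply_comm U i k]
    _ = (U * Uᵀ) i i := by rw [Matrix.mul_assoc, ← Matrix.mul_assoc Uᵀ, hU, Matrix.one_mul]
    _ = ∑ s, U i s ^ 2 := by simp only [mul_apply, transpose_apply, sq]

lemma linf_PT_le {m n r : ℕ} {U : Matrix (Fin m) (Fin r) ℝ} {V : Matrix (Fin n) (Fin r) ℝ}
    (hU : Uᵀ * U = 1) (hV : Vᵀ * V = 1) {ρ : ℝ} (hρ : 0 < ρ) (N : Matrix (Fin m) (Fin n) ℝ) :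
    linf (PT U V N) ≤ beta U V ρ * sharp ρ N := by
  set s := sharp ρ N
  have hs : 0 ≤ s := sharp_nonneg hρ.le N
  have h_corner (i j) : |(U * Uᵀ * N * (V * Vᵀ)) i j| ≤ two2inf U * two2inf V * s := by
    have h_row := (sum_sq_mul_transpose_apply hU i).trans_le (sum_sq_le_two2inf_sq U i)
    have h_col : ∑ l, (V * Vᵀ) l j ^ 2 ≤ two2inf V ^ 2 := by
      simp only [mul_transpose_self_apply_comm V j]
      exact (sum_sq_mul_transpose_apply hV j).trans_le (sum_sq_le_two2inf_sq V j)
    refine abs_le_of_sq_le_sq ?_ (by positivity [two2inf_nonneg U, two2inf_nonneg V])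
    calc _ ≤ _ := sq_mul_mul_apply_le (U * Uᵀ) N (V * Vᵀ) i j
      _ ≤ two2inf U ^ 2 * two2inf V ^ 2 * s ^ 2 :=
        mul_le_mul (mul_le_mul h_row h_col (by positivity) (by positivity))
          (n11_mul_nII_le_sharp_sq hρ N) (mul_nonneg (n11_nonneg N) (nII_nonneg N)) (by positivity)
      _ = _ := by ring
  refine linf_le (mul_nonneg (beta_nonneg hρ.le U V) hs) fun i j => ?_
  calc |PT U V N i j|
      ≤ |(U * Uᵀ * N) i j| + |(N * (V * Vᵀ)) i j| + |(U * Uᵀ * N * (V * Vᵀ)) i j| := by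
        simp only [PT, Matrix.sub_apply, Matrix.add_apply]
        exact (abs_sub _ _).trans (add_le_add_left (abs_add_le _ _) _)
    _ ≤ linf (U * Uᵀ) * n11 N + nII N * linf (V * Vᵀ) + two2inf U * two2inf V * s :=
        add_le_add_three (abs_mul_apply_le_linf_mul_n11 _ _ i j)
          (abs_mul_apply_le_nII_mul_linf _ _ i j) (h_corner i j)
    _ ≤ linf (U * Uᵀ) * (ρ⁻¹ * s) + ρ * s * linf (V * Vᵀ) + two2inf U * two2inf V * s := by
        gcongr
        · exact linf_nonneg _
        · exact n11_le_inv_mul_sharp hρ N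
        · exact linf_nonneg _
        · exact nII_le_mul_sharp hρ N
    _ = beta U V ρ * s := by rw [beta]; ring

lemma opNormWrt_le {m n : ℕ} {f : Matrix (Fin m) (Fin n) ℝ → ℝ}
    {T : Matrix (Fin m) (Fin n) ℝ → Matrix (Fin m) (Fin n) ℝ} {C : ℝ} (hC : 0 ≤ C)
    (h : ∀ M, f (T M) ≤ C * f M) : opNormWrt f T ≤ C :=
  Real.sSup_le (fun _ ⟨M, hM, hx⟩ => hx ▸ (h M).trans (mul_le_of_le_one_right hC hM)) hC

lemma alpha_eq_sharp_signM {m n : ℕ} (X : Matrix (Fin m) (Fin n) ℝ) (ρ : ℝ) :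
    alpha X ρ = sharp ρ (signM X) :=
  rfl

lemma sharp_POmega_le {m n : ℕ} (X M : Matrix (Fin m) (Fin n) ℝ) {ρ : ℝ} (hρ : 0 ≤ ρ) :
    sharp ρ (POmega X M) ≤ alpha X ρ * linf M := by
  rw [alpha_eq_sharp_signM]
  refine sharp_le_mul_of_abs_le hρ (linf_nonneg M) fun i j => ?_
  by_cases hX : X i j = 0
  · simp [POmega, signM, hX]
  · rcases Real.sign_apply_eq_of_ne_zero _ hX with h | h <;>
      simpa [POmega, signM, hX, h] using abs_le_linf M i j

/-- `‖P_T ∘ P_Ω‖_{ℓ∞→ℓ∞} ≤ α(ρ)β(ρ)`. -/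
theorem PT_comp_POmega_linf_opNorm {m n r : ℕ} (Xs : Matrix (Fin m) (Fin n) ℝ)
    (U : Matrix (Fin m) (Fin r) ℝ) (V : Matrix (Fin n) (Fin r) ℝ)
    (hU : Uᵀ * U = 1) (hV : Vᵀ * V = 1) (ρ : ℝ) (hρ : 0 < ρ) :
    opNormWrt linf (fun M => PT U V (POmega Xs M)) ≤ alpha Xs ρ * beta U V ρ := by
  have hα : 0 ≤ alpha Xs ρ := alpha_eq_sharp_signM Xs ρ ▸ sharp_nonneg hρ.le _
  have hβ := beta_nonneg hρ.le U V
  refine opNormWrt_le (mul_nonneg hα hβ) fun M => ?_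
  calc linf (PT U V (POmega Xs M)) ≤ beta U V ρ * sharp ρ (POmega Xs M) := linf_PT_le hU hV hρ _
    _ ≤ beta U V ρ * (alpha Xs ρ * linf M) :=
        mul_le_mul_of_nonneg_left (sharp_POmega_le Xs M hρ.le) hβ
    _ = alpha Xs ρ * beta U V ρ * linf M := by ring

end SLR
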